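/- arXiv:1102.5543 — 5 statements merged into one kernel-verified Lean document; each statement's English description precedes it below -/
import Mathlib

section
/- Let A = {a₁,…,a_p} and B = {b₁,…,b_q} be finite multisets of positive integers, let m ∈ {2,3,4} and M be positive integers, with m+2 ≤ a_i ≤ M and 2 ≤ b_j ≤ M for all i,j, and q ≥ max{p,1}. Suppose there is an injection φ : [p] → [q] with a_i ≤ b_{φ(i)} + m for every i. Then m^(q−p) · (∏ a_i) · (∏ b_j) ≥ (∏ (a_i − m)) · (∏ (b_j + m)). -/
theorem stmt3 (p q m M : ℕ) (hm : m = 2 ∨ m = 3 ∨ m = 4) (hM : 0 < M)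
    (a : Fin p → ℕ) (b : Fin q → ℕ)
    (ha : ∀ i, m + 2 ≤ a i ∧ a i ≤ M) (hb : ∀ j, 2 ≤ b j ∧ b j ≤ M)
    (hq : max p 1 ≤ q)
    (φ : Fin p → Fin q) (hφ : Function.Injective φ)
    (hab : ∀ i, a i ≤ b (φ i) + m) :
    (∏ i, (a i - m)) * (∏ j, (b j + m)) ≤ m ^ (q - p) * (∏ i, a i) * (∏ j, b j) := by
  classical
  have hm2 : 2 ≤ m := by rcases hm with h|h|h <;> omega
  set S := Finset.univ.image φ with hS
  have hcard : S.card = p := by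
    rw [hS, Finset.card_image_of_injective _ hφ, Finset.card_univ, Fintype.card_fin]
  have hcompl : Sᶜ.card = q - p := by
    rw [Finset.card_compl, hcard, Fintype.card_fin]
  have hsplit : ∀ f : Fin q → ℕ, (∏ j, f j) = (∏ j ∈ S, f j) * (∏ j ∈ Sᶜ, f j) :=
    fun f => (Finset.prod_mul_prod_compl S f).symm
  have himg : ∀ f : Fin q → ℕ, (∏ j ∈ S, f j) = ∏ i, f (φ i) := by
    intro f
    rw [hS, Finset.prod_image (fun x _ y _ h => hφ h)]
  rw [hsplit (fun j => b j + m), hsplit b, himg, himg]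
  have key1 : (∏ i, (a i - m)) * (∏ i, (b (φ i) + m)) ≤ (∏ i, a i) * (∏ i, b (φ i)) := by
    rw [← Finset.prod_mul_distrib, ← Finset.prod_mul_distrib]
    apply Finset.prod_le_prod (fun _ _ => Nat.zero_le _)
    intro i _
    have h1 := (ha i).1
    have h2 := hab i
    have h3 : a i - m ≤ b (φ i) := by omega
    have h4 : a i = (a i - m) + m := by omega
    nlinarith [Nat.zero_le (a i - m)]
  have key2 : (∏ j ∈ Sᶜ, (b j + m)) ≤ m ^ (q - p) * ∏ j ∈ Sᶜ, b j := by
    rw [← hcompl, ← Finset.prod_const, ← Finset.prod_mul_distrib]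
    apply Finset.prod_le_prod (fun _ _ => Nat.zero_le _)
    intro j _
    have := (hb j).1
    nlinarith
  calc (∏ i, (a i - m)) * ((∏ i, (b (φ i) + m)) * (∏ j ∈ Sᶜ, (b j + m)))
      = ((∏ i, (a i - m)) * (∏ i, (b (φ i) + m))) * (∏ j ∈ Sᶜ, (b j + m)) := by ring
    _ ≤ ((∏ i, a i) * (∏ i, b (φ i))) * (m ^ (q - p) * ∏ j ∈ Sᶜ, b j) :=
        Nat.mul_le_mul key1 key2
    _ = m ^ (q - p) * (∏ i, a i) * ((∏ i, b (φ i)) * (∏ j ∈ Sᶜ, b j)) := by ring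
end

section
/- Let A = {a₁,…,a_p}, B = {b₁,…,b_q}, m ∈ {2,3,4}, M positive integers with m+2 ≤ a_i ≤ M, 2 ≤ b_j ≤ M, q ≥ max{p,1}, and an injection φ : [p] → [q] with a_i ≤ b_{φ(i)} + m for all i. If moreover a_i < b_{φ(i)} + m for some i, then m^(q−p)·(∏a_i)·(∏b_j) ≥ (1 + m/(M²−m²)) · (∏(a_i−m))·(∏(b_j+m)). -/
theorem stmt4 (p q m M : ℕ) (hm : m = 2 ∨ m = 3 ∨ m = 4) (hM : 0 < M)
    (a : Fin p → ℕ) (b : Fin q → ℕ)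
    (ha : ∀ i, m + 2 ≤ a i ∧ a i ≤ M) (hb : ∀ j, 2 ≤ b j ∧ b j ≤ M)
    (hq : max p 1 ≤ q)
    (φ : Fin p → Fin q) (hφ : Function.Injective φ)
    (hab : ∀ i, a i ≤ b (φ i) + m)
    (hstrict : ∃ i, a i < b (φ i) + m) :
    (1 + (m : ℚ) / ((M : ℚ) ^ 2 - (m : ℚ) ^ 2)) *
        (∏ i, ((a i : ℚ) - (m : ℚ))) * (∏ j, ((b j : ℚ) + (m : ℚ))) ≤
      (m : ℚ) ^ (q - p) * (∏ i, (a i : ℚ)) * (∏ j, (b j : ℚ)) := by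
  obtain ⟨i₀, hi₀⟩ := hstrict
  have hm2 : 2 ≤ m := by rcases hm with h|h|h <;> omega
  have hmM : m + 2 ≤ M := le_trans (ha i₀).1 (ha i₀).2
  have hmQ : (2:ℚ) ≤ (m:ℚ) := by exact_mod_cast hm2
  have hMQ : (m:ℚ) + 2 ≤ (M:ℚ) := by exact_mod_cast hmM
  have hden : (0:ℚ) < (M:ℚ)^2 - (m:ℚ)^2 := by nlinarith
  set ε : ℚ := (m:ℚ) / ((M:ℚ)^2 - (m:ℚ)^2) with hε
  have hε0 : 0 ≤ ε := div_nonneg (by positivity) hden.le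
  -- casted bounds
  have haQ : ∀ i, (m:ℚ) + 2 ≤ (a i : ℚ) ∧ (a i : ℚ) ≤ (M:ℚ) := by
    intro i; exact ⟨by exact_mod_cast (ha i).1, by exact_mod_cast (ha i).2⟩
  have hbQ : ∀ j, (2:ℚ) ≤ (b j : ℚ) ∧ (b j : ℚ) ≤ (M:ℚ) := by
    intro j; exact ⟨by exact_mod_cast (hb j).1, by exact_mod_cast (hb j).2⟩
  have habQ : ∀ i, (a i : ℚ) ≤ (b (φ i) : ℚ) + m := by
    intro i; exact_mod_cast hab i
  have hi₀Q : (a i₀ : ℚ) + 1 ≤ (b (φ i₀) : ℚ) + m := by exact_mod_cast hi₀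
  -- split products over the image of φ
  set S : Finset (Fin q) := Finset.univ.image φ with hS
  have hcard : Sᶜ.card = q - p := by
    have h1 : S.card = p := by
      rw [hS, Finset.card_image_of_injective _ hφ, Finset.card_univ, Fintype.card_fin]
    rw [Finset.card_compl, h1, Fintype.card_fin]
  have hsplit : ∀ f : Fin q → ℚ, (∏ j, f j) = (∏ i, f (φ i)) * ∏ j ∈ Sᶜ, f j := by
    intro f
    rw [← Finset.prod_mul_prod_compl S f]
    congr 1
    rw [hS, Finset.prod_image (fun x _ y _ h => hφ h)]
  have hpow : (m:ℚ) ^ (q - p) = ∏ _j ∈ Sᶜ, (m:ℚ) := by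
    rw [Finset.prod_const, hcard]
  rw [hsplit (fun j => (b j : ℚ) + m), hsplit (fun j => (b j : ℚ)), hpow]
  -- termwise lemmas
  have key1 : ∀ i : Fin p, ((a i : ℚ) - m) * ((b (φ i) : ℚ) + m) ≤ (a i : ℚ) * (b (φ i) : ℚ) := by
    intro i
    nlinarith [habQ i, hmQ, (haQ i).1]
  have fnn : ∀ i : Fin p, 0 ≤ ((a i : ℚ) - m) * ((b (φ i) : ℚ) + m) := by
    intro i
    have := (haQ i).1
    have := (hbQ (φ i)).1
    nlinarith
  have key2 : (1 + ε) * (((a i₀ : ℚ) - m) * ((b (φ i₀) : ℚ) + m)) ≤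
      (a i₀ : ℚ) * (b (φ i₀) : ℚ) := by
    set A := (a i₀ : ℚ); set B := (b (φ i₀) : ℚ)
    have hA1 := (haQ i₀).1
    have hA2 := (haQ i₀).2
    have hB1 := (hbQ (φ i₀)).1
    have hB2 := (hbQ (φ i₀)).2
    have h2 : (A - m) * (B + m) ≤ (M:ℚ)^2 - (m:ℚ)^2 := by nlinarith
    have h3 : ε * ((A - m) * (B + m)) ≤ (m:ℚ) := by
      calc ε * ((A - m) * (B + m)) ≤ ε * ((M:ℚ)^2 - (m:ℚ)^2) := by
            exact mul_le_mul_of_nonneg_left h2 hε0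
        _ = m := by rw [hε]; field_simp
    have h1 : (A - m) * (B + m) + m ≤ A * B := by
      nlinarith [mul_nonneg (by linarith : (0:ℚ) ≤ (m:ℚ)) (by linarith : (0:ℚ) ≤ B + m - A - 1)]
    linarith [h3, h1]
  -- product over matched pairs
  have T1 : (1 + ε) * (∏ i, ((a i : ℚ) - m)) * (∏ i, ((b (φ i) : ℚ) + m)) ≤
      (∏ i, (a i : ℚ)) * (∏ i, (b (φ i) : ℚ)) := by
    rw [mul_assoc, ← Finset.prod_mul_distrib, ← Finset.prod_mul_distrib]
    rw [← Finset.mul_prod_erase Finset.univ _ (Finset.mem_univ i₀),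
        ← Finset.mul_prod_erase Finset.univ
          (fun i => (a i : ℚ) * (b (φ i) : ℚ)) (Finset.mem_univ i₀), ← mul_assoc]
    apply mul_le_mul key2
    · exact Finset.prod_le_prod (fun i _ => fnn i) (fun i _ => key1 i)
    · exact Finset.prod_nonneg (fun i _ => fnn i)
    · positivity
  have T2 : (∏ j ∈ Sᶜ, ((b j : ℚ) + m)) ≤ ∏ j ∈ Sᶜ, ((m:ℚ) * (b j : ℚ)) := by
    apply Finset.prod_le_prod
    · intro j _; have := (hbQ j).1; positivity
    · intro j _
      have h1 := (hbQ j).1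
      have h2 : 2 * (b j : ℚ) ≤ (m:ℚ) * (b j : ℚ) :=
        mul_le_mul_of_nonneg_right hmQ (by linarith)
      have h3 : (m:ℚ) * 2 ≤ (m:ℚ) * (b j : ℚ) :=
        mul_le_mul_of_nonneg_left h1 (by linarith)
      linarith
  beta_reduce
  calc (1 + ε) * (∏ i, ((a i : ℚ) - m)) *
        ((∏ i, ((b (φ i) : ℚ) + m)) * ∏ j ∈ Sᶜ, ((b j : ℚ) + m))
      = ((1 + ε) * (∏ i, ((a i : ℚ) - m)) * (∏ i, ((b (φ i) : ℚ) + m))) *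
        ∏ j ∈ Sᶜ, ((b j : ℚ) + m) := by ring
    _ ≤ ((∏ i, (a i : ℚ)) * (∏ i, (b (φ i) : ℚ))) * ∏ j ∈ Sᶜ, ((m:ℚ) * (b j : ℚ)) := by
        apply mul_le_mul T1 T2
        · exact Finset.prod_nonneg (fun j _ => by positivity)
        · exact mul_nonneg (by positivity) (by positivity)
    _ = (∏ _j ∈ Sᶜ, (m:ℚ)) * (∏ i, (a i : ℚ)) * ((∏ i, (b (φ i) : ℚ)) * ∏ j ∈ Sᶜ, (b j : ℚ)) := by
        rw [Finset.prod_mul_distrib]; ring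
end

section
/- Let n ≥ r > ℓ ≥ 1 be integers and let H be an r-uniform hypergraph on n vertices. Let F ⊆ E(H) be a maximal ℓ-intersecting family of hyperedges of H. Then the number of (2,ℓ)-Kneser colorings of H is at most 2^|F|; consequently κ(H,2,ℓ) ≤ 2^{ex(n, B_{r,ℓ})}. -/
theorem stmt10 (n r ℓ : ℕ) (hℓ : 1 ≤ ℓ) (hr : ℓ < r) (hn : r ≤ n)
    (E : Finset (Finset (Fin n))) (hE : ∀ e ∈ E, e.card = r)
    (F : Finset (Finset (Fin n))) (hFE : F ⊆ E)
    (hFint : ∀ e ∈ F, ∀ f ∈ F, ℓ ≤ (e ∩ f).card)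
    (hFmax : ∀ e ∈ E, e ∉ F → ∃ f ∈ F, (e ∩ f).card < ℓ) :
    Nat.card {Δ : {e // e ∈ E} → Fin 2 //
        ∀ e f : {e // e ∈ E}, Δ e = Δ f →
          ℓ ≤ ((e : Finset (Fin n)) ∩ (f : Finset (Fin n))).card} ≤ 2 ^ F.card ∧
    Nat.card {Δ : {e // e ∈ E} → Fin 2 //
        ∀ e f : {e // e ∈ E}, Δ e = Δ f →
          ℓ ≤ ((e : Finset (Fin n)) ∩ (f : Finset (Fin n))).card} ≤
      2 ^ sSup {m | ∃ G : Finset (Finset (Fin n)), (∀ e ∈ G, e.card = r) ∧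
        (∀ e ∈ G, ∀ f ∈ G, ℓ ≤ (e ∩ f).card) ∧ G.card = m} := by
  have key : Nat.card {Δ : {e // e ∈ E} → Fin 2 //
        ∀ e f : {e // e ∈ E}, Δ e = Δ f →
          ℓ ≤ ((e : Finset (Fin n)) ∩ (f : Finset (Fin n))).card} ≤ 2 ^ F.card := by
    have fin2 : ∀ a b c : Fin 2, a ≠ c → b ≠ c → a = b := by decide
    have hinj : Function.Injective
        (fun (Δ : {Δ : {e // e ∈ E} → Fin 2 //
          ∀ e f : {e // e ∈ E}, Δ e = Δ f →
            ℓ ≤ ((e : Finset (Fin n)) ∩ (f : Finset (Fin n))).card})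
          (f : {f // f ∈ F}) => Δ.1 ⟨f.1, hFE f.2⟩) := by
      intro Δ₁ Δ₂ h
      refine Subtype.ext (funext fun e => ?_)
      by_cases he : (e : Finset (Fin n)) ∈ F
      · exact congrFun h ⟨e.1, he⟩
      · obtain ⟨f, hfF, hlt⟩ := hFmax e.1 e.2 he
        have h1 : Δ₁.1 e ≠ Δ₁.1 ⟨f, hFE hfF⟩ := fun hc =>
          absurd (Δ₁.2 e ⟨f, hFE hfF⟩ hc) (by simpa using Nat.not_le.mpr hlt)
        have h2 : Δ₂.1 e ≠ Δ₂.1 ⟨f, hFE hfF⟩ := fun hc =>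
          absurd (Δ₂.2 e ⟨f, hFE hfF⟩ hc) (by simpa using Nat.not_le.mpr hlt)
        have hf : Δ₁.1 ⟨f, hFE hfF⟩ = Δ₂.1 ⟨f, hFE hfF⟩ := congrFun h ⟨f, hfF⟩
        exact fin2 _ _ _ h1 (hf ▸ h2)
    calc Nat.card {Δ : {e // e ∈ E} → Fin 2 //
          ∀ e f : {e // e ∈ E}, Δ e = Δ f →
            ℓ ≤ ((e : Finset (Fin n)) ∩ (f : Finset (Fin n))).card}
        ≤ Nat.card ({f // f ∈ F} → Fin 2) := Nat.card_le_card_of_injective _ hinj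
      _ = 2 ^ F.card := by
          simp [Nat.card_eq_fintype_card, Fintype.card_fun]
  refine ⟨key, key.trans ?_⟩
  apply Nat.pow_le_pow_right (by norm_num)
  apply le_csSup
  · refine ⟨2 ^ n, ?_⟩
    rintro m ⟨G, -, -, rfl⟩
    calc G.card ≤ Fintype.card (Finset (Fin n)) := Finset.card_le_univ G
      _ = 2 ^ n := by simp
  · exact ⟨F, fun e he => hE e (hFE he), hFint, rfl⟩
end

section
/- Let r, k, ℓ be positive integers with ℓ < r, and let H be an r-uniform hypergraph admitting at least one (k,ℓ)-Kneser coloring. Then H has an ℓ-cover of cardinality at most k·C(r,ℓ), i.e., there exists a set C of at most k·C(r,ℓ) many ℓ-subsets of vertices such that every hyperedge of H contains some element of C. -/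
/-!
Pick one hyperedge from each colour class. Every hyperedge shares at least `ℓ` vertices with the
representative of its own colour class, so the `ℓ`-subsets of the at most `k` representatives,
`C(r, ℓ)` of them per representative, form an `ℓ`-cover.
-/

open Finset

theorem Function.exists_finset_card_le_forall_exists_eq {ι κ : Type*} [Fintype κ] (Δ : ι → κ) :
    ∃ R : Finset ι, #R ≤ Fintype.card κ ∧ ∀ i, ∃ j ∈ R, Δ j = Δ i := by
  classical
  choose g hg using fun c : Set.range Δ => c.2
  refine ⟨univ.image g, card_image_le.trans (Fintype.card_le_of_injective _ Subtype.val_injective),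
    fun i => ⟨g ⟨Δ i, i, rfl⟩, mem_image_of_mem _ (mem_univ _), hg _⟩⟩

theorem Finset.exists_powersetCard_cover {V : Type*} [DecidableEq V] (R E : Finset (Finset V))
    {r ℓ : ℕ} (hR : ∀ f ∈ R, #f ≤ r) (hRE : ∀ e ∈ E, ∃ f ∈ R, ℓ ≤ #(f ∩ e)) :
    ∃ C : Finset (Finset V), #C ≤ #R * r.choose ℓ ∧ (∀ t ∈ C, #t = ℓ) ∧
      ∀ e ∈ E, ∃ t ∈ C, t ⊆ e := by
  refine ⟨R.biUnion (powersetCard ℓ), ?_, ?_, ?_⟩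
  · calc #(R.biUnion (powersetCard ℓ)) ≤ ∑ f ∈ R, #(powersetCard ℓ f) := card_biUnion_le
      _ ≤ ∑ _f ∈ R, r.choose ℓ := sum_le_sum fun f hf => by
          rw [card_powersetCard]; exact Nat.choose_le_choose ℓ (hR f hf)
      _ = #R * r.choose ℓ := by rw [sum_const, smul_eq_mul]
  · intro t ht
    obtain ⟨f, -, htf⟩ := mem_biUnion.mp ht
    exact (mem_powersetCard.mp htf).2
  · intro e he
    obtain ⟨f, hfR, hfe⟩ := hRE e he
    obtain ⟨t, htfe, ht⟩ := exists_subset_card_eq hfe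
    exact ⟨t, mem_biUnion.mpr ⟨f, hfR, mem_powersetCard.mpr ⟨htfe.trans inter_subset_left, ht⟩⟩,
      htfe.trans inter_subset_right⟩

theorem stmt12_general {V : Type*} [DecidableEq V] (r k ℓ : ℕ)
    (E : Finset (Finset V)) (hE : ∀ e ∈ E, e.card = r)
    (hcol : ∃ Δ : {e // e ∈ E} → Fin k,
      ∀ e f : {e // e ∈ E}, Δ e = Δ f → ℓ ≤ ((e : Finset V) ∩ (f : Finset V)).card) :
    ∃ C : Finset (Finset V), C.card ≤ k * r.choose ℓ ∧ (∀ t ∈ C, t.card = ℓ) ∧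
      ∀ e ∈ E, ∃ t ∈ C, t ⊆ e := by
  obtain ⟨Δ, hΔ⟩ := hcol
  obtain ⟨R, hRk, hRrep⟩ := Δ.exists_finset_card_le_forall_exists_eq
  obtain ⟨C, hC, hCℓ, hCcover⟩ := exists_powersetCard_cover (R.map (.subtype _)) E
    (r := r) (ℓ := ℓ) (by simp +contextual [hE])
    fun e he => by
      obtain ⟨f, hfR, hfe⟩ := hRrep ⟨e, he⟩
      exact ⟨f, mem_map_of_mem _ hfR, hΔ f ⟨e, he⟩ hfe⟩
  refine ⟨C, hC.trans (Nat.mul_le_mul_right _ ?_), hCℓ, hCcover⟩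
  simpa using hRk

theorem stmt12 {V : Type*} [Fintype V] [DecidableEq V] (r k ℓ : ℕ)
    (hℓ : 1 ≤ ℓ) (hr : ℓ < r) (hk : 1 ≤ k)
    (E : Finset (Finset V)) (hE : ∀ e ∈ E, e.card = r)
    (hcol : ∃ Δ : {e // e ∈ E} → Fin k,
      ∀ e f : {e // e ∈ E}, Δ e = Δ f → ℓ ≤ ((e : Finset V) ∩ (f : Finset V)).card) :
    ∃ C : Finset (Finset V), C.card ≤ k * r.choose ℓ ∧ (∀ t ∈ C, t.card = ℓ) ∧
      ∀ e ∈ E, ∃ t ∈ C, t ⊆ e :=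
  stmt12_general r k ℓ E hE hcol
end

section
/- Let r > ℓ ≥ 1 and k ≥ 2 be integers, let c = ⌈k/3⌉, and let n ≥ max{r, cℓ}. Let t₁,…,t_c be pairwise disjoint ℓ-subsets of [n], and let H be the r-uniform hypergraph on [n] whose hyperedges are all r-subsets of [n] containing some t_i. Then the number of (k,ℓ)-Kneser colorings of H is at least D(k)^{C(n−cℓ, r−ℓ)}, where D(k) = 3^{k/3} if k ≡ 0 (mod 3), D(k) = 4·3^{⌈k/3⌉−2} if k ≡ 1 (mod 3), and D(k) = 2·3^{⌊k/3⌋} if k ≡ 2 (mod 3). -/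
/-- group sizes: `w` groups of size 2, the rest of size 3. -/
def kgS (w i : ℕ) : ℕ := if i < w then 2 else 3

/-- offsets of the color groups. -/
def kgO (w i : ℕ) : ℕ := 3 * i - min i w

lemma kgS_pos (w i : ℕ) : 0 < kgS w i := by unfold kgS; split <;> omega

lemma kg_lt {k c w : ℕ} (hk3 : 3 * c = k + w) (hwc : w ≤ c)
    {i a : ℕ} (hi : i < c) (ha : a < kgS w i) : kgO w i + a < k := by
  unfold kgS at ha; unfold kgO
  by_cases h : i < w <;> simp only [h, if_true, if_false] at ha <;> omega

lemma kg_inj {c w : ℕ} (hwc : w ≤ c) {i j a b : ℕ}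
    (hi : i < c) (hj : j < c) (ha : a < kgS w i) (hb : b < kgS w j)
    (hab : kgO w i + a = kgO w j + b) : i = j := by
  unfold kgS at ha hb; unfold kgO at hab
  by_cases h1 : i < w <;> by_cases h2 : j < w <;>
    simp only [h1, h2, if_true, if_false] at ha hb <;> omega

lemma kg_prod {c w : ℕ} (hwc : w ≤ c) :
    ∏ i ∈ Finset.range c, kgS w i = 2 ^ w * 3 ^ (c - w) := by
  unfold kgS
  rw [Finset.prod_ite (f := fun _ => 2) (g := fun _ => 3)]
  have h1 : (Finset.range c).filter (fun i => i < w) = Finset.range w := by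
    ext x; simp only [Finset.mem_filter, Finset.mem_range]; omega
  have h2 : (Finset.range c).filter (fun i => ¬ i < w) = Finset.Ico w c := by
    ext x; simp only [Finset.mem_filter, Finset.mem_range, Finset.mem_Ico]; omega
  rw [h1, h2, Finset.prod_const, Finset.prod_const, Finset.card_range, Nat.card_Ico]

theorem stmt14 (n r ℓ k c : ℕ) (hℓ : 1 ≤ ℓ) (hr : ℓ < r) (hk : 2 ≤ k)
    (hc : c = (k + 2) / 3) (hn : max r (c * ℓ) ≤ n)
    (t : Fin c → Finset (Fin n)) (ht : ∀ i, (t i).card = ℓ)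
    (hdisj : ∀ i j, i ≠ j → Disjoint (t i) (t j)) :
    (if k % 3 = 0 then 3 ^ (k / 3)
     else if k % 3 = 1 then 4 * 3 ^ (c - 2)
     else 2 * 3 ^ (k / 3)) ^ ((n - c * ℓ).choose (r - ℓ)) ≤
    Nat.card {Δ : {e // e ∈ (Finset.univ.powersetCard r).filter
          (fun e : Finset (Fin n) => ∃ i, t i ⊆ e)} → Fin k //
      ∀ e f, Δ e = Δ f → ℓ ≤ ((e : Finset (Fin n)) ∩ (f : Finset (Fin n))).card} := by
  classical
  obtain ⟨w, hw⟩ : ∃ w : ℕ, w = (3 - k % 3) % 3 := ⟨_, rfl⟩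
  have hwc : w ≤ c := by omega
  have hk3 : 3 * c = k + w := by omega
  have hD : (if k % 3 = 0 then 3 ^ (k / 3)
      else if k % 3 = 1 then 4 * 3 ^ (c - 2)
      else 2 * 3 ^ (k / 3)) = 2 ^ w * 3 ^ (c - w) := by
    rcases (by omega : k % 3 = 0 ∨ k % 3 = 1 ∨ k % 3 = 2) with h | h | h
    · rw [if_pos h, show w = 0 by omega, show c - 0 = k / 3 by omega]; norm_num
    · rw [if_neg (by omega), if_pos h, show w = 2 by omega,
        show c - 2 = c - 2 from rfl]; norm_num
    · rw [if_neg (by omega), if_neg (by omega), show w = 1 by omega,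
        show c - 1 = k / 3 by omega]; norm_num
  -- the Finset setup
  set T : Finset (Fin n) := Finset.univ.biUnion t with hT
  have hTcard : T.card = c * ℓ := by
    rw [hT, Finset.card_biUnion (fun i _ j _ hij => hdisj i j hij)]
    simp [ht, mul_comm]
  set P : Finset (Finset (Fin n)) := Tᶜ.powersetCard (r - ℓ) with hP
  have hPcard : P.card = (n - c * ℓ).choose (r - ℓ) := by
    rw [hP, Finset.card_powersetCard, Finset.card_compl, hTcard, Fintype.card_fin]
  set ES := (Finset.univ.powersetCard r).filter
      (fun e : Finset (Fin n) => ∃ i, t i ⊆ e) with hES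
  have hmemES : ∀ e : Finset (Fin n), e ∈ ES ↔ (e.card = r ∧ ∃ i, t i ⊆ e) := by
    intro e
    simp [hES, Finset.mem_powersetCard, and_comm]
  -- minimal index of an edge
  have hfilne : ∀ e : {e // e ∈ ES}, (Finset.univ.filter (fun i => t i ⊆ e.1)).Nonempty := by
    intro e
    obtain ⟨-, i, hi⟩ := (hmemES e.1).1 e.2
    exact ⟨i, by simp [hi]⟩
  set idx : {e // e ∈ ES} → Fin c :=
    fun e => (Finset.univ.filter (fun i => t i ⊆ e.1)).min' (hfilne e) with hidxdef
  have hidx : ∀ e, t (idx e) ⊆ e.1 := by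
    intro e
    have h := Finset.min'_mem _ (hfilne e)
    simpa using h
  -- canonical edges
  have hdisjTS : ∀ (i : Fin c) (S : Finset (Fin n)), S ∈ P → Disjoint (t i) S := by
    intro i S hS
    have hSsub : S ⊆ Tᶜ := (Finset.mem_powersetCard.1 hS).1
    have hti : t i ⊆ T := Finset.subset_biUnion_of_mem t (Finset.mem_univ i)
    exact (disjoint_compl_right (a := T)).mono hti hSsub
  have hScard : ∀ S ∈ P, S.card = r - ℓ := fun S hS => (Finset.mem_powersetCard.1 hS).2
  have hcanmem : ∀ (i : Fin c) (S : Finset (Fin n)), S ∈ P → (t i ∪ S) ∈ ES := by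
    intro i S hS
    rw [hmemES]
    refine ⟨?_, i, Finset.subset_union_left⟩
    rw [Finset.card_union_of_disjoint (hdisjTS i S hS), ht, hScard S hS]
    omega
  have hcanidx : ∀ (i : Fin c) (S : Finset (Fin n)), S ∈ P →
      ∀ j : Fin c, t j ⊆ t i ∪ S → j = i := by
    intro i S hS j hj
    by_contra hne
    have hd1 : Disjoint (t j) (t i) := hdisj j i hne
    have hd2 : Disjoint (t j) S := hdisjTS j S hS
    have hj0 : t j = ∅ := Finset.eq_empty_of_forall_notMem (fun x hx => by
      rcases Finset.mem_union.1 (hj hx) with h | h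
      · exact Finset.disjoint_left.1 hd1 hx h
      · exact Finset.disjoint_left.1 hd2 hx h)
    have := ht j
    rw [hj0] at this
    simp at this
    omega
  have hidxcan : ∀ (i : Fin c) (S : Finset (Fin n)) (hS : S ∈ P),
      idx ⟨t i ∪ S, hcanmem i S hS⟩ = i := by
    intro i S hS
    exact hcanidx i S hS _ (hidx _)
  have hcansdiff : ∀ (i : Fin c) (S : Finset (Fin n)), S ∈ P → (t i ∪ S) \ t i = S := by
    intro i S hS
    exact Finset.union_sdiff_cancel_left (hdisjTS i S hS)
  -- the coloring map
  have hbound : ∀ (F : ∀ i : Fin c, {S // S ∈ P} → Fin (kgS w i.1)) (e : {e // e ∈ ES}),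
      (if h : e.1 \ t (idx e) ∈ P then (F (idx e) ⟨e.1 \ t (idx e), h⟩).1 else 0)
        < kgS w (idx e).1 := by
    intro F e
    split
    · exact Fin.is_lt _
    · exact kgS_pos w _
  set F2Δ : (∀ i : Fin c, {S // S ∈ P} → Fin (kgS w i.1)) → ({e // e ∈ ES} → Fin k) :=
    fun F e =>
      ⟨kgO w (idx e).1 +
         (if h : e.1 \ t (idx e) ∈ P then (F (idx e) ⟨e.1 \ t (idx e), h⟩).1 else 0),
       kg_lt hk3 hwc (idx e).2 (hbound F e)⟩ with hF2Δ
  have hvalid : ∀ F e f, F2Δ F e = F2Δ F f → ℓ ≤ (e.1 ∩ f.1).card := by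
    intro F e f hef
    have hv := congrArg Fin.val hef
    simp only [hF2Δ] at hv
    have h1 : (idx e).1 = (idx f).1 :=
      kg_inj hwc (idx e).2 (idx f).2 (hbound F e) (hbound F f) hv
    have h2 : idx e = idx f := Fin.ext h1
    have h3 : t (idx e) ⊆ e.1 ∩ f.1 := Finset.subset_inter (hidx e) (h2 ▸ hidx f)
    calc ℓ = (t (idx e)).card := (ht _).symm
    _ ≤ _ := Finset.card_le_card h3
  have heval : ∀ F (i : Fin c) (S : Finset (Fin n)) (hS : S ∈ P),
      (F2Δ F ⟨t i ∪ S, hcanmem i S hS⟩).1 = kgO w i.1 + (F i ⟨S, hS⟩).1 := by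
    intro F i S hS
    have h1 := hidxcan i S hS
    simp only [hF2Δ]
    rw [h1, hcansdiff i S hS, dif_pos hS]
  -- the injection
  set Φ : (∀ i : Fin c, {S // S ∈ P} → Fin (kgS w i.1)) →
      {Δ : {e // e ∈ ES} → Fin k //
        ∀ e f, Δ e = Δ f → ℓ ≤ ((e : Finset (Fin n)) ∩ (f : Finset (Fin n))).card} :=
    fun F => ⟨F2Δ F, hvalid F⟩ with hΦ
  have hinj : Function.Injective Φ := by
    intro F G h
    funext i S
    obtain ⟨S, hS⟩ := S
    have h2 : F2Δ F = F2Δ G := congrArg Subtype.val h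
    have h3 : (F2Δ F ⟨t i ∪ S, hcanmem i S hS⟩ : Fin k).1
        = (F2Δ G ⟨t i ∪ S, hcanmem i S hS⟩ : Fin k).1 := by rw [h2]
    rw [heval F i S hS, heval G i S hS] at h3
    exact Fin.ext (by omega)
  have hle := Nat.card_le_card_of_injective Φ hinj
  have hcardA : Nat.card (∀ i : Fin c, {S // S ∈ P} → Fin (kgS w i.1)) =
      ∏ i : Fin c, (kgS w i.1) ^ P.card := by
    rw [Nat.card_pi]
    refine Finset.prod_congr rfl (fun i _ => ?_)
    rw [Nat.card_fun, Nat.card_eq_finsetCard, Nat.card_eq_fintype_card, Fintype.card_fin]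
  calc (if k % 3 = 0 then 3 ^ (k / 3)
      else if k % 3 = 1 then 4 * 3 ^ (c - 2)
      else 2 * 3 ^ (k / 3)) ^ ((n - c * ℓ).choose (r - ℓ))
      = (2 ^ w * 3 ^ (c - w)) ^ P.card := by rw [hD, hPcard]
    _ = (∏ i ∈ Finset.range c, kgS w i) ^ P.card := by rw [kg_prod hwc]
    _ = (∏ i : Fin c, kgS w i.1) ^ P.card := by rw [Fin.prod_univ_eq_prod_range]
    _ = ∏ i : Fin c, (kgS w i.1) ^ P.card := (Finset.prod_pow _ _ _).symm
    _ = Nat.card (∀ i : Fin c, {S // S ∈ P} → Fin (kgS w i.1)) := hcardA.symm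
    _ ≤ _ := hle
end
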